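/- Let (R,m) be a Cohen–Macaulay local ring with infinite residue field, I an m-primary ideal, J a minimal reduction of I, and suppose λ(I^{n+1}/J I^n) = 1 for some n ≥ 1, J ∩ I^{n+1} = J I^n, and I^{n+1} ⊄ J. Fix α ∈ I^{n+1}\J with I^{n+1} ⊆ (α)+J, and let V = (I + (J:I^n))/(J:I^n), a vector space over k = R/m. Then the map sending (ī_1,…,ī_{n+1}) ∈ V^{n+1} to the class mod m of any f ∈ R with i_1⋯i_{n+1} − f·α ∈ J is a well-defined, symmetric, non-degenerate (n+1)-linear form on V over k. -/

import Mathlib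

open IsLocalRing

/-- The length of an `R`-module `M`, defined as the Krull dimension of its
lattice of submodules. -/
noncomputable def moduleLength (R M : Type*) [CommRing R] [AddCommGroup M]
    [Module R M] : WithBot ℕ∞ :=
  Order.krullDim (Submodule R M)

/-- `λ(R/I)`, as an extended natural number. -/
noncomputable def quotLength {R : Type*} [CommRing R] (I : Ideal R) : WithBot ℕ∞ :=
  moduleLength R (R ⧸ I)

/-- `λ(R/I)` as a natural number (junk value if infinite). -/
noncomputable def quotLengthNat {R : Type*} [CommRing R] (I : Ideal R) : ℕ :=
  ((quotLength I).unbotD 0).toNat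

/-- `λ(I/J)` for ideals (more precisely, the length of `I/(I ∩ J)`). -/
noncomputable def subLength {R : Type*} [CommRing R] (I J : Ideal R) : WithBot ℕ∞ :=
  moduleLength R (↥I ⧸ (Submodule.comap I.subtype J))

/-- `λ(I/J)` as a natural number (junk value if infinite). -/
noncomputable def subLengthNat {R : Type*} [CommRing R] (I J : Ideal R) : ℕ :=
  ((subLength I J).unbotD 0).toNat

/-- `J` is a reduction of `I`: `J ⊆ I` and `I^{n+1} = J I^n` for some `n`. -/
def IsReduction {R : Type*} [CommRing R] (J I : Ideal R) : Prop :=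
  J ≤ I ∧ ∃ n : ℕ, I ^ (n + 1) = J * I ^ n

/-- `J` is a minimal reduction of `I`. -/
def IsMinimalReduction {R : Type*} [CommRing R] (J I : Ideal R) : Prop :=
  IsReduction J I ∧ ∀ K : Ideal R, IsReduction K I → K ≤ J → K = J

/-- An ideal of a local ring is `m`-primary iff its radical is the maximal ideal. -/
def IsMPrimary {R : Type*} [CommRing R] [IsLocalRing R] (I : Ideal R) : Prop :=
  I.radical = maximalIdeal R

/-- The depth of `R` at `M` is at least `k`: there is a regular sequence of
length `k` contained in `M`. -/
def DepthGE (R : Type*) [CommRing R] (M : Ideal R) (k : ℕ) : Prop :=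
  ∃ rs : List R, (∀ x ∈ rs, x ∈ M) ∧ RingTheory.Sequence.IsRegular R rs ∧
    rs.length = k

/-- A ring `R` is Cohen–Macaulay at the (maximal) ideal `M` if there is a
regular sequence inside `M` of length equal to the Krull dimension of `R`. -/
def IsCohenMacaulayAt (R : Type*) [CommRing R] (M : Ideal R) : Prop :=
  ∃ rs : List R, (∀ x ∈ rs, x ∈ M) ∧ RingTheory.Sequence.IsRegular R rs ∧
    (rs.length : WithBot ℕ∞) = ringKrullDim R

/-- A local ring is Cohen–Macaulay if its depth equals its dimension. -/
def IsCMLocalRing (R : Type*) [CommRing R] [IsLocalRing R] : Prop :=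
  IsCohenMacaulayAt R (maximalIdeal R)

/-- A ring `R` is Gorenstein at the (maximal) ideal `M` if it is
Cohen–Macaulay there and cutting down by a maximal regular sequence `rs`
leaves a ring whose socle `((rs) : M)/(rs)` has length one (type one). -/
def IsGorensteinAt (R : Type*) [CommRing R] (M : Ideal R) : Prop :=
  ∃ rs : List R, (∀ x ∈ rs, x ∈ M) ∧ RingTheory.Sequence.IsRegular R rs ∧
    (rs.length : WithBot ℕ∞) = ringKrullDim R ∧
    subLength (Submodule.colon (Ideal.span {x | x ∈ rs}) M)
      (Ideal.span {x | x ∈ rs}) = 1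

/-- A local ring is Gorenstein if it is Gorenstein at its maximal ideal. -/
def IsGorensteinLocalRing (R : Type*) [CommRing R] [IsLocalRing R] : Prop :=
  IsGorensteinAt R (maximalIdeal R)

/-- The associated graded ring `gr_I(R) = ⊕ₙ Iⁿ/Iⁿ⁺¹`, realized as
`R[It]/I·R[It]` where `R[It]` is the Rees algebra of `I`. -/
noncomputable def grRing {R : Type*} [CommRing R] (I : Ideal R) : Type _ :=
  (reesAlgebra I) ⧸ (Ideal.span ((algebraMap R (reesAlgebra I)) '' (I : Set R)))

noncomputable instance {R : Type*} [CommRing R] (I : Ideal R) :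
    CommRing (grRing I) :=
  inferInstanceAs (CommRing ((reesAlgebra I) ⧸
    (Ideal.span ((algebraMap R (reesAlgebra I)) '' (I : Set R)))))

/-- The maximal homogeneous ideal `m/I ⊕ gr_I(R)₊` of `gr_I(R)`, where `M`
is the maximal ideal of `R`: it is the image of the ideal of the Rees algebra
consisting of those elements whose degree-zero coefficient lies in `M`. -/
noncomputable def grMaxIdeal {R : Type*} [CommRing R] (I : Ideal R)
    (M : Ideal R) : Ideal (grRing I) :=
  Ideal.span ((Ideal.Quotient.mk _) ''
    {x : reesAlgebra I | Polynomial.coeff (x : Polynomial R) 0 ∈ M})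

section Aux

open IsLocalRing

private lemma aux_smul_top_eq_bot {R M : Type*} [CommRing R] [IsLocalRing R]
    [AddCommGroup M] [Module R M] [Module.Finite R M]
    (h : Order.krullDim (Submodule R M) = 1) :
    (maximalIdeal R) • (⊤ : Submodule R M) = ⊥ := by
  have hbt : (⊥ : Submodule R M) ≠ ⊤ := by
    intro he
    have hall : ∀ a : Submodule R M, a = ⊥ := fun a => le_bot_iff.mp (he ▸ le_top)
    have hs : Subsingleton (Submodule R M) := ⟨fun a b => (hall a).trans (hall b).symm⟩
    have h0 := Order.krullDim_nonpos_of_subsingleton (α := Submodule R M)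
    rw [h] at h0
    norm_num at h0
  by_cases htop : (maximalIdeal R) • (⊤ : Submodule R M) = ⊤
  · exfalso
    apply hbt
    exact (Submodule.eq_bot_of_le_smul_of_le_jacobson_bot (maximalIdeal R) ⊤
      Module.Finite.fg_top (htop.symm.le) (by
        rw [IsLocalRing.jacobson_eq_maximalIdeal ⊥ bot_ne_top])).symm
  by_contra hbot
  set N := (maximalIdeal R) • (⊤ : Submodule R M) with hN
  have h1 : (⊥ : Submodule R M) < N := bot_lt_iff_ne_bot.mpr hbot
  have h2 : N < ⊤ := lt_top_iff_ne_top.mpr htop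
  have hchain : ∀ i : Fin 2, (![⊥, N, ⊤] : Fin 3 → Submodule R M) i.castSucc <
      (![⊥, N, ⊤] : Fin 3 → Submodule R M) i.succ := by
    intro i
    fin_cases i
    · exact h1
    · exact h2
  have hle := Order.LTSeries.length_le_krullDim (⟨2, ![⊥, N, ⊤], hchain⟩ : LTSeries (Submodule R M))
  rw [h] at hle
  norm_num at hle

private lemma aux_prod_mem_pow {R ι : Type*} [CommRing R] (I : Ideal R)
    (s : Finset ι) (v : ι → R) (hv : ∀ i ∈ s, v i ∈ I) :
    (∏ i ∈ s, v i) ∈ I ^ s.card := by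
  have := Ideal.prod_mem_prod (I := fun _ : ι => I) (s := s) (x := v) hv
  simpa [Finset.prod_const] using this

end Aux

/-- the rule sending a tuple of elements of `I` (taken modulo
`J : Iⁿ`) to (the class modulo `m` of) any `f` with `i₁⋯iₙ₊₁ − f·α ∈ J` is a
well-defined, symmetric, non-degenerate `(n+1)`-linear form on
`V = (I + (J:Iⁿ))/(J:Iⁿ)` over `k = R/m`; everything is phrased here on
representatives, with "equal in `k`" rendered as "difference lies in `m`". -/
theorem statement8 {R : Type*} [CommRing R] [IsNoetherianRing R] [IsLocalRing R]
    [Infinite (ResidueField R)] (hCM : IsCMLocalRing R)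
    (I J : Ideal R) (hI : IsMPrimary I) (hJ : IsMinimalReduction J I)
    (n : ℕ) (hn : 1 ≤ n)
    (hlen : subLength (I ^ (n + 1)) (J * I ^ n) = 1)
    (hcap : J ⊓ I ^ (n + 1) = J * I ^ n)
    (hnsub : ¬ I ^ (n + 1) ≤ J)
    (α : R) (hα : α ∈ I ^ (n + 1)) (hαJ : α ∉ J)
    (hspan : I ^ (n + 1) ≤ Ideal.span {α} ⊔ J) :
    ∃ F : (Fin (n + 1) → R) → R,
      -- defining property: `i₁⋯iₙ₊₁ − F(i)·α ∈ J`
      (∀ v : Fin (n + 1) → R, (∀ i, v i ∈ I) →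
        (∏ i, v i) - F v * α ∈ J) ∧
      -- well-defined on `V^{n+1}`
      (∀ v w : Fin (n + 1) → R, (∀ i, v i ∈ I) → (∀ i, w i ∈ I) →
        (∀ i, v i - w i ∈ Submodule.colon J ((I ^ n : Ideal R) : Set R)) →
        F v - F w ∈ maximalIdeal R) ∧
      -- symmetric
      (∀ (v : Fin (n + 1) → R) (σ : Equiv.Perm (Fin (n + 1))),
        (∀ i, v i ∈ I) → F (v ∘ σ) - F v ∈ maximalIdeal R) ∧
      -- additive in each slot
      (∀ (v : Fin (n + 1) → R) (t : Fin (n + 1)) (x y : R),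
        (∀ i, v i ∈ I) → x ∈ I → y ∈ I →
        F (Function.update v t (x + y)) - F (Function.update v t x) -
          F (Function.update v t y) ∈ maximalIdeal R) ∧
      -- homogeneous in each slot
      (∀ (v : Fin (n + 1) → R) (t : Fin (n + 1)) (c x : R),
        (∀ i, v i ∈ I) → x ∈ I →
        F (Function.update v t (c * x)) - c * F (Function.update v t x) ∈
          maximalIdeal R) ∧
      -- non-degenerate
      (∀ (t : Fin (n + 1)) (x : R), x ∈ I →
        (∀ v : Fin (n + 1) → R, (∀ i, v i ∈ I) →
          F (Function.update v t x) ∈ maximalIdeal R) →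
        x ∈ Submodule.colon J ((I ^ n : Ideal R) : Set R)) := by
  classical
  -- Step 0: `m • I^{n+1} ⊆ J * I^n`
  have hmI : ∀ a ∈ maximalIdeal R, ∀ y ∈ I ^ (n + 1), a * y ∈ J * I ^ n := by
    intro a ha y hy
    set M := (↥(I ^ (n + 1)) ⧸ (Submodule.comap (I ^ (n + 1)).subtype (J * I ^ n)))
    have hkd : Order.krullDim (Submodule R M) = 1 := hlen
    have hbot := aux_smul_top_eq_bot (M := M) hkd
    have hmem : a • (Submodule.Quotient.mk (⟨y, hy⟩ : ↥(I ^ (n + 1))) : M) ∈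
        (maximalIdeal R) • (⊤ : Submodule R M) :=
      Submodule.smul_mem_smul ha Submodule.mem_top
    rw [hbot, Submodule.mem_bot, ← Submodule.Quotient.mk_smul,
      Submodule.Quotient.mk_eq_zero] at hmem
    simpa using hmem
  have hJI : ∀ f ∈ maximalIdeal R, f * α ∈ J :=
    fun f hf => Ideal.mul_le_left (I := J) (J := I ^ n) (hmI f hf α hα)
  -- Step 1: multiples of `α` landing in `J` have coefficient in `m`
  have hunit : ∀ f : R, f * α ∈ J → f ∈ maximalIdeal R := by
    intro f hf
    by_contra hfm
    have hu : IsUnit f := by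
      rwa [IsLocalRing.mem_maximalIdeal, mem_nonunits_iff, not_not] at hfm
    obtain ⟨u, rfl⟩ := hu
    apply hαJ
    have h2 : (↑u⁻¹ : R) * ((u : R) * α) ∈ J := J.mul_mem_left _ hf
    simpa [← mul_assoc] using h2
  -- Step 2: existence of the coefficient
  have hex : ∀ v : Fin (n + 1) → R, (∀ i, v i ∈ I) →
      ∃ f, (∏ i, v i) - f * α ∈ J := by
    intro v hv
    have hp : (∏ i, v i) ∈ I ^ (n + 1) := by
      have := aux_prod_mem_pow I Finset.univ v (fun i _ => hv i)
      simpa using this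
    obtain ⟨y, hy, z, hz, hyz⟩ := Submodule.mem_sup.mp (hspan hp)
    obtain ⟨f, rfl⟩ := Ideal.mem_span_singleton'.mp hy
    exact ⟨f, by rw [← hyz]; simpa using hz⟩
  set F : (Fin (n + 1) → R) → R := fun v =>
    if h : ∃ f, (∏ i, v i) - f * α ∈ J then h.choose else 0 with hFdefn
  have hFdef : ∀ v : Fin (n + 1) → R, (∀ i, v i ∈ I) →
      (∏ i, v i) - F v * α ∈ J := by
    intro v hv
    have h := hex v hv
    simp only [hFdefn, dif_pos h]
    exact h.choose_spec
  refine ⟨F, hFdef, ?_, ?_, ?_, ?_, ?_⟩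
  · -- well-definedness
    intro v w hv hw hvw
    apply hunit
    have h1 := hFdef v hv
    have h2 := hFdef w hw
    have h3 : (∏ i, v i) - (∏ i, w i) ∈ J := by
      have hsplit : (∏ i, v i) = ∑ t ∈ (Finset.univ : Finset (Fin (n + 1))).powerset,
          (∏ i ∈ t, (v i - w i)) * ∏ i ∈ Finset.univ \ t, w i := by
        rw [← Finset.prod_add]
        exact Finset.prod_congr rfl fun i _ => by ring
      have hterm : ∀ t ∈ (Finset.univ : Finset (Fin (n + 1))).powerset, t ≠ ∅ →
          (∏ i ∈ t, (v i - w i)) * ∏ i ∈ Finset.univ \ t, w i ∈ J := by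
        intro t _ hne
        obtain ⟨i0, hi0⟩ := Finset.nonempty_iff_ne_empty.mpr hne
        rw [← Finset.mul_prod_erase t _ hi0, mul_assoc]
        have hrest : (∏ i ∈ t.erase i0, (v i - w i)) * ∏ i ∈ Finset.univ \ t, w i ∈ I ^ n := by
          have ha : (∏ i ∈ t.erase i0, (v i - w i)) ∈ I ^ (t.erase i0).card :=
            aux_prod_mem_pow I _ _ (fun i _ => I.sub_mem (hv i) (hw i))
          have hb : (∏ i ∈ Finset.univ \ t, w i) ∈ I ^ (Finset.univ \ t).card :=
            aux_prod_mem_pow I _ _ (fun i _ => hw i)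
          have hcard : (t.erase i0).card + (Finset.univ \ t).card = n := by
            have h1' : t.card ≤ n + 1 := by
              simpa using Finset.card_le_card (Finset.subset_univ t)
            have h2' : 1 ≤ t.card := Finset.card_pos.mpr ⟨i0, hi0⟩
            have h3' : (t.erase i0).card = t.card - 1 := Finset.card_erase_of_mem hi0
            have h4' : (Finset.univ \ t).card = (n + 1) - t.card := by
              rw [Finset.card_sdiff_of_subset (Finset.subset_univ t)]
              simp
            omega
          have := Ideal.mul_mem_mul ha hb
          rwa [← pow_add, hcard] at this
        have := Submodule.mem_colon.mp (hvw i0) _ hrest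
        simpa using this
      have hsum : (∏ i, v i) - (∏ i, w i) =
          ∑ t ∈ (Finset.univ : Finset (Fin (n + 1))).powerset.erase ∅,
            (∏ i ∈ t, (v i - w i)) * ∏ i ∈ Finset.univ \ t, w i := by
        rw [hsplit, ← Finset.add_sum_erase _ _ (Finset.empty_mem_powerset _)]
        simp
      rw [hsum]
      exact Ideal.sum_mem J fun t ht =>
        hterm t (Finset.mem_of_mem_erase ht) (Finset.ne_of_mem_erase ht)
    have hkey : (F v - F w) * α =
        ((∏ i, w i) - F w * α) - ((∏ i, v i) - F v * α) + ((∏ i, v i) - (∏ i, w i)) := by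
      ring
    rw [hkey]
    exact J.add_mem (J.sub_mem h2 h1) h3
  · -- symmetry
    intro v σ hv
    apply hunit
    have h1 := hFdef v hv
    have h2 := hFdef (v ∘ σ) (fun i => hv (σ i))
    have hpeq : (∏ i, (v ∘ σ) i) = ∏ i, v i := Equiv.prod_comp σ v
    rw [hpeq] at h2
    have hkey : (F (v ∘ σ) - F v) * α =
        ((∏ i, v i) - F v * α) - ((∏ i, v i) - F (v ∘ σ) * α) := by ring
    rw [hkey]
    exact J.sub_mem h1 h2
  · -- additivity
    intro v t x y hv hx hy
    apply hunit
    have hvu : ∀ z : R, z ∈ I → ∀ i, Function.update v t z i ∈ I := by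
      intro z hz i
      rw [Function.update_apply]
      split_ifs
      · exact hz
      · exact hv i
    have hprod : ∀ z : R, (∏ i, Function.update v t z i) =
        z * ∏ i ∈ Finset.univ \ {t}, v i := by
      intro z
      rw [Finset.prod_update_of_mem (Finset.mem_univ t)]
    have h1 := hFdef _ (hvu (x + y) (I.add_mem hx hy))
    have h2 := hFdef _ (hvu x hx)
    have h3 := hFdef _ (hvu y hy)
    rw [hprod] at h1 h2 h3
    have hkey : (F (Function.update v t (x + y)) - F (Function.update v t x) -
        F (Function.update v t y)) * α =
        (x * ∏ i ∈ Finset.univ \ {t}, v i - F (Function.update v t x) * α) +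
        (y * ∏ i ∈ Finset.univ \ {t}, v i - F (Function.update v t y) * α) -
        ((x + y) * ∏ i ∈ Finset.univ \ {t}, v i - F (Function.update v t (x + y)) * α) := by
      ring
    rw [hkey]
    exact J.sub_mem (J.add_mem h2 h3) h1
  · -- homogeneity
    intro v t c x hv hx
    apply hunit
    have hvu : ∀ z : R, z ∈ I → ∀ i, Function.update v t z i ∈ I := by
      intro z hz i
      rw [Function.update_apply]
      split_ifs
      · exact hz
      · exact hv i
    have hprod : ∀ z : R, (∏ i, Function.update v t z i) =
        z * ∏ i ∈ Finset.univ \ {t}, v i := by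
      intro z
      rw [Finset.prod_update_of_mem (Finset.mem_univ t)]
    have h1 := hFdef _ (hvu (c * x) (I.mul_mem_left c hx))
    have h2 := hFdef _ (hvu x hx)
    rw [hprod] at h1 h2
    have hkey : (F (Function.update v t (c * x)) - c * F (Function.update v t x)) * α =
        c * (x * ∏ i ∈ Finset.univ \ {t}, v i - F (Function.update v t x) * α) -
        ((c * x) * ∏ i ∈ Finset.univ \ {t}, v i - F (Function.update v t (c * x)) * α) := by
      ring
    rw [hkey]
    exact J.sub_mem (J.mul_mem_left c h2) h1
  · -- non-degeneracy
    intro t x hx hall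
    have hKle : I ^ n ≤ Submodule.colon J (Ideal.span {x}) := by
      rw [Submodule.pow_eq_span_pow_set, Submodule.span_le]
      intro p hp
      obtain ⟨f, hf⟩ := Set.mem_pow.mp hp
      have hfp : (∏ j, (f j : R)) = p := by rwa [List.prod_ofFn] at hf
      set v : Fin (n + 1) → R := t.insertNth x (fun j => (f j : R)) with hv
      have hvI : ∀ i, v i ∈ I := by
        intro i
        refine Fin.succAboveCases t ?_ ?_ i
        · simpa [hv] using hx
        · intro j
          simpa [hv] using (f j).2
      have hvt : v t = x := by rw [hv]; simp
      have hupdate : Function.update v t x = v := by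
        conv_lhs => rw [← hvt]
        exact Function.update_eq_self t v
      have hFm : F v ∈ maximalIdeal R := by
        have := hall v hvI
        rwa [hupdate] at this
      have h1 := hFdef v hvI
      have hprodv : (∏ i, v i) = x * p := by
        rw [Fin.prod_univ_succAbove v t, hvt, ← hfp]
        congr 1
        exact Finset.prod_congr rfl fun j _ => by simp [hv]
      have hFα : F v * α ∈ J := hJI _ hFm
      have hxp : x * p ∈ J := by
        have := J.add_mem h1 hFα
        rwa [hprodv, sub_add_cancel] at this
      rw [SetLike.mem_coe, Submodule.mem_colon]
      intro q hq
      obtain ⟨c, rfl⟩ := Ideal.mem_span_singleton'.mp hq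
      have : p * (c * x) = c * (x * p) := by ring
      rw [smul_eq_mul, this]
      exact J.mul_mem_left c hxp
    rw [Submodule.mem_colon]
    intro p hp
    have hpK := hKle hp
    have := Submodule.mem_colon.mp hpK x (Ideal.mem_span_singleton_self x)
    rw [smul_eq_mul] at this
    rw [smul_eq_mul, mul_comm]
    exact this
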